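/- arXiv:2101.01676 — 3 statements merged into one kernel-verified Lean document; each statement's English description precedes it below -/
import Mathlib

section
/- Let 𝔐 be a class of preference models and ℭ a class of dynamic operators closed over 𝔐 such that every ★ ∈ ℭ satisfies (Faith). Then for every propositional formula φ ∈ L_0, the formula Eφ → (μφ ↔ [★φ]μ⊤) is valid in ⟨𝔐, ℭ⟩, where ⊤ is a fixed propositional tautology. -/
inductive PForm (P : Type) : Type
  | atom : P → PForm P
  | neg  : PForm P → PForm P
  | and  : PForm P → PForm P → PForm P

inductive DForm (P : Type) : Type
  | atom  : P → DForm P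
  | neg   : DForm P → DForm P
  | and   : DForm P → DForm P → DForm P
  | all   : DForm P → DForm P
  | boxLe : DForm P → DForm P
  | boxLt : DForm P → DForm P
  | dyn   : PForm P → DForm P → DForm P

structure PrefModel (P : Type) where
  W : Type
  le : W → W → Prop
  refl : ∀ w, le w w
  trans : ∀ w₁ w₂ w₃, le w₁ w₂ → le w₂ w₃ → le w₁ w₃
  wf : WellFounded (fun w w' => le w w' ∧ ¬ le w' w)
  val : P → Set W

namespace PrefModel
variable {P : Type}
def lt (M : PrefModel P) (w w' : M.W) : Prop := M.le w w' ∧ ¬ M.le w' w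
def Min (M : PrefModel P) (S : Set M.W) : Set M.W :=
  {w | w ∈ S ∧ ¬ ∃ w' ∈ S, M.le w' w ∧ ¬ M.le w w'}
end PrefModel

def psat {P : Type} (M : PrefModel P) : PForm P → M.W → Prop
  | .atom p, w => w ∈ M.val p
  | .neg φ, w => ¬ psat M φ w
  | .and φ ψ, w => psat M φ w ∧ psat M ψ w

def pext {P : Type} (M : PrefModel P) (φ : PForm P) : Set M.W := {w | psat M φ w}

structure DynOp (P : Type) where
  rel : (M : PrefModel P) → PForm P → M.W → M.W → Prop
  refl : ∀ M φ w, rel M φ w w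
  trans : ∀ M φ w₁ w₂ w₃, rel M φ w₁ w₂ → rel M φ w₂ w₃ → rel M φ w₁ w₃
  wf : ∀ M φ, WellFounded (fun w w' => rel M φ w w' ∧ ¬ rel M φ w' w)

def DynOp.apply {P : Type} (s : DynOp P) (M : PrefModel P) (φ : PForm P) : PrefModel P where
  W := M.W
  le := s.rel M φ
  refl := s.refl M φ
  trans := s.trans M φ
  wf := s.wf M φ
  val := M.val

def DynOp.srel {P : Type} (s : DynOp P) (M : PrefModel P) (φ : PForm P) (w w' : M.W) : Prop :=
  s.rel M φ w w' ∧ ¬ s.rel M φ w' w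

def PForm.toD {P : Type} : PForm P → DForm P
  | .atom p => .atom p
  | .neg φ => .neg φ.toD
  | .and φ ψ => .and φ.toD ψ.toD

namespace DForm
variable {P : Type}
def imp (ξ ψ : DForm P) : DForm P := .neg (.and ξ (.neg ψ))
def iff (ξ ψ : DForm P) : DForm P := .and (imp ξ ψ) (imp ψ ξ)
def or (ξ ψ : DForm P) : DForm P := .neg (.and (.neg ξ) (.neg ψ))
def exi (ξ : DForm P) : DForm P := .neg (.all (.neg ξ))
def diaLt (ξ : DForm P) : DForm P := .neg (.boxLt (.neg ξ))
def mu (ξ : DForm P) : DForm P := .and ξ (.neg (diaLt ξ))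
def bel (ψ χ : DForm P) : DForm P := .all (imp (mu χ) ψ)
end DForm

def dsat {P : Type} (s : DynOp P) : DForm P → (M : PrefModel P) → M.W → Prop
  | .atom p, M, w => w ∈ M.val p
  | .neg ξ, M, w => ¬ dsat s ξ M w
  | .and ξ₁ ξ₂, M, w => dsat s ξ₁ M w ∧ dsat s ξ₂ M w
  | .all ξ, M, _ => ∀ w', dsat s ξ M w'
  | .boxLe ξ, M, w => ∀ w', M.le w' w → dsat s ξ M w'
  | .boxLt ξ, M, w => ∀ w', M.lt w' w → dsat s ξ M w'
  | .dyn φ ξ, M, w => dsat s ξ (s.apply M φ) w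

def ClosedOver {P : Type} (s : DynOp P) (𝔐 : Set (PrefModel P)) : Prop :=
  ∀ M ∈ 𝔐, ∀ φ : PForm P, s.apply M φ ∈ 𝔐

/-- `★` satisfies (Faith). -/
def Faith {P : Type} (s : DynOp P) : Prop :=
  ∀ (M : PrefModel P) (φ : PForm P), pext M φ ≠ ∅ →
    M.Min (pext M φ) = (s.apply M φ).Min Set.univ

namespace dsat

variable {P : Type} (s : DynOp P) (M : PrefModel P) (w : M.W)

theorem imp_iff (ξ ψ : DForm P) :
    dsat s (ξ.imp ψ) M w ↔ (dsat s ξ M w → dsat s ψ M w) := by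
  simp only [DForm.imp, dsat, not_and, not_not]

theorem iff_iff (ξ ψ : DForm P) :
    dsat s (ξ.iff ψ) M w ↔ (dsat s ξ M w ↔ dsat s ψ M w) := by
  simp only [DForm.iff, dsat, imp_iff, iff_def]

theorem exi_iff (ξ : DForm P) : dsat s ξ.exi M w ↔ ∃ w', dsat s ξ M w' := by
  simp only [DForm.exi, dsat, not_forall, not_not]

theorem dyn_iff (φ : PForm P) (ξ : DForm P) :
    dsat s (.dyn φ ξ) M w ↔ dsat s ξ (s.apply M φ) w := Iff.rfl

theorem toD_iff (φ : PForm P) : dsat s φ.toD M w ↔ psat M φ w := by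
  induction φ with
  | atom p => rfl
  | neg φ ih => simp only [PForm.toD, dsat, psat, ih]
  | and φ ψ ihφ ihψ => simp only [PForm.toD, dsat, psat, ihφ, ihψ]

theorem mu_toD_iff (φ : PForm P) : dsat s (DForm.mu φ.toD) M w ↔ w ∈ M.Min (pext M φ) := by
  simp only [DForm.mu, DForm.diaLt, dsat, not_not, toD_iff, PrefModel.lt, PrefModel.Min, pext,
    Set.mem_ofPred_eq, not_exists, not_and, and_imp]
  exact and_congr_right fun _ => forall_congr' fun w' => by tauto

end dsat

theorem pext_eq_univ_of_valid {P : Type} {top : PForm P}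
    (htop : ∀ (M : PrefModel P) (w : M.W), psat M top w) (M : PrefModel P) :
    pext M top = Set.univ :=
  Set.eq_univ_of_forall (htop M)

theorem faith_validity_general {P : Type} (𝔐 : Set (PrefModel P)) (ℭ : Set (DynOp P))
    (hfaith : ∀ s ∈ ℭ, Faith s)
    (φ top : PForm P) (htop : ∀ (M : PrefModel P) (w : M.W), psat M top w) :
    ∀ s ∈ ℭ, ∀ M ∈ 𝔐, ∀ w : M.W,
      dsat s ((DForm.exi φ.toD).imp
        ((DForm.mu φ.toD).iff (DForm.dyn φ (DForm.mu top.toD)))) M w := by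
  intro s hs M _ w
  rw [dsat.imp_iff, dsat.exi_iff, dsat.iff_iff, dsat.dyn_iff, dsat.mu_toD_iff]
  rintro ⟨v, hv⟩
  have hφ : pext M φ ≠ ∅ := Set.nonempty_iff_ne_empty.mp ⟨v, (dsat.toD_iff s M v φ).mp hv⟩
  rw [hfaith s hs M φ hφ, ← pext_eq_univ_of_valid htop (s.apply M φ)]
  exact (dsat.mu_toD_iff s (s.apply M φ) w top).symm

theorem faith_validity {P : Type} (𝔐 : Set (PrefModel P)) (ℭ : Set (DynOp P))
    (hclosed : ∀ s ∈ ℭ, ClosedOver s 𝔐) (hfaith : ∀ s ∈ ℭ, Faith s)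
    (φ top : PForm P) (htop : ∀ (M : PrefModel P) (w : M.W), psat M top w) :
    ∀ s ∈ ℭ, ∀ M ∈ 𝔐, ∀ w : M.W,
      dsat s ((DForm.exi φ.toD).imp
        ((DForm.mu φ.toD).iff (DForm.dyn φ (DForm.mu top.toD)))) M w :=
  faith_validity_general 𝔐 ℭ hfaith φ top htop
end

section
/- Let 𝔐 be a class of preference models and ★ a dynamic operator closed over 𝔐. The schema Eφ → (μφ ↔ [★φ]μ⊤) is valid in ⟨𝔐, ★⟩ for every φ ∈ L_0 if and only if ★ satisfies (Faith) in 𝔐, i.e., for every M = (W, ≤, v) ∈ 𝔐 and every φ ∈ L_0 with ⟦φ⟧_M ≠ ∅ one has Min_≤ ⟦φ⟧_M = Min_{≤_{★φ}} W, where ★(M,φ) = (W, ≤_{★φ}, v). -/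
/-!
Both sides say the same thing world by world: `μφ` holds exactly at the `≤`-minimal
`φ`-worlds, `[★φ]μ⊤` exactly at the `≤_{★φ}`-minimal worlds of `W`, and `Eφ` says that
`⟦φ⟧` is nonempty. Validity of the schema is therefore pointwise equality of the two sets
of minimal worlds whenever `⟦φ⟧ ≠ ∅`, which is (Faith).
-/

theorem PrefModel.mem_Min_iff {P : Type} (M : PrefModel P) (S : Set M.W) (w : M.W) :
    w ∈ M.Min S ↔ w ∈ S ∧ ∀ w' ∈ S, ¬ M.lt w' w := by
  simp [PrefModel.Min, PrefModel.lt]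

section Semantics

variable {P : Type} (s : DynOp P) (M : PrefModel P) (w : M.W)

theorem dsat_imp (ξ ψ : DForm P) :
    dsat s (ξ.imp ψ) M w ↔ (dsat s ξ M w → dsat s ψ M w) := by
  simp [DForm.imp, dsat]

theorem dsat_iff (ξ ψ : DForm P) :
    dsat s (ξ.iff ψ) M w ↔ (dsat s ξ M w ↔ dsat s ψ M w) := by
  simp only [DForm.iff, dsat, dsat_imp]
  exact iff_iff_implies_and_implies.symm

theorem dsat_toD (φ : PForm P) : dsat s φ.toD M w ↔ psat M φ w := by
  induction φ generalizing w with
  | atom p => rfl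
  | neg φ ih => exact not_congr (ih w)
  | and φ ψ ih₁ ih₂ => exact and_congr (ih₁ w) (ih₂ w)

theorem dsat_exi_toD (φ : PForm P) : dsat s (DForm.exi φ.toD) M w ↔ (pext M φ).Nonempty := by
  simp [DForm.exi, dsat, dsat_toD, pext, Set.Nonempty]

theorem dsat_mu_toD (φ : PForm P) : dsat s (DForm.mu φ.toD) M w ↔ w ∈ M.Min (pext M φ) := by
  simp [DForm.mu, DForm.diaLt, dsat, dsat_toD, PrefModel.mem_Min_iff, pext, imp_not_comm]

theorem dsat_dyn_mu_top {φ top : PForm P} (htop : ∀ w, psat (s.apply M φ) top w) :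
    dsat s (DForm.dyn φ (DForm.mu top.toD)) M w ↔ w ∈ (s.apply M φ).Min Set.univ := by
  have huniv : pext (s.apply M φ) top = Set.univ := Set.eq_univ_of_forall htop
  exact (dsat_mu_toD s (s.apply M φ) w top).trans (by rw [huniv]; exact Iff.rfl)

end Semantics

theorem faith_characterisation_general {P : Type} (𝔐 : Set (PrefModel P)) (s : DynOp P)
    (top : PForm P) (htop : ∀ (M : PrefModel P) (w : M.W), psat M top w) :
    (∀ φ : PForm P, ∀ M ∈ 𝔐, ∀ w : M.W,
        dsat s ((DForm.exi φ.toD).imp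
          ((DForm.mu φ.toD).iff (DForm.dyn φ (DForm.mu top.toD)))) M w) ↔
      (∀ M ∈ 𝔐, ∀ φ : PForm P, pext M φ ≠ ∅ →
        M.Min (pext M φ) = (s.apply M φ).Min Set.univ) := by
  simp only [dsat_imp, dsat_iff, dsat_exi_toD, dsat_mu_toD, dsat_dyn_mu_top s _ _ (htop _),
    ← Set.nonempty_iff_ne_empty]
  exact ⟨fun h M hM φ hφ => Set.ext fun w => h φ M hM w hφ,
    fun h φ M hM w hφ => Set.ext_iff.mp (h M hM φ hφ) w⟩

theorem faith_characterisation {P : Type} (𝔐 : Set (PrefModel P)) (s : DynOp P)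
    (hclosed : ClosedOver s 𝔐)
    (top : PForm P) (htop : ∀ (M : PrefModel P) (w : M.W), psat M top w) :
    (∀ φ : PForm P, ∀ M ∈ 𝔐, ∀ w : M.W,
        dsat s ((DForm.exi φ.toD).imp
          ((DForm.mu φ.toD).iff (DForm.dyn φ (DForm.mu top.toD)))) M w) ↔
      (∀ M ∈ 𝔐, ∀ φ : PForm P, pext M φ ≠ ∅ →
        M.Min (pext M φ) = (s.apply M φ).Min Set.univ) :=
  faith_characterisation_general 𝔐 s top htop
end

section
/- Assume P is nonempty. There exist dynamic operators ★ and ∗ such that: ∗ satisfies (DP1); ★ does not satisfy (DP1); and for every class 𝔐 of preference models over which both ★ and ∗ are closed and every formula ξ ∈ L_≤(★), ξ is satisfiable in ⟨𝔐, ★⟩ (i.e., D,w ⊨ ξ for some dynamic model D ∈ ⟨𝔐, ★⟩ and some world w) if and only if ξ is satisfiable in ⟨𝔐, ∗⟩. -/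
/-- `★` satisfies (DP1): for all `w, w' ∈ ⟦φ⟧`, `w ≤_{★φ} w'` iff `w ≤ w'`. -/
def SatDP1 {P : Type} (s : DynOp P) : Prop :=
  ∀ (M : PrefModel P) (φ : PForm P) (w w' : M.W),
    psat M φ w → psat M φ w' → (s.rel M φ w w' ↔ M.le w w')

/-!
Take `∗` to be the identity operator and let `★` differ from it only on models whose order is
discrete and whose valuation is constant, which `★` collapses into a single cluster. Such a model
and its collapse satisfy the same formulas at all worlds under the identity operator: no world is
distinguished by an atom, `[<]` is vacuous in both, and `[≤]` only reaches worlds that are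
indistinguishable anyway. By induction on formulas, `★` and `∗` then satisfy the same formulas at
every pointed model, whatever the class; but on the two-world discrete model `★` violates (DP1).
-/

namespace PrefModel

variable {P : Type}

def IsUniformDiscrete (M : PrefModel P) : Prop :=
  (∀ w w', M.le w w' → w = w') ∧ ∀ (p : P) (w w' : M.W), w ∈ M.val p ↔ w' ∈ M.val p

def twoPoint (P : Type) : PrefModel P where
  W := Bool
  le := Eq
  refl _ := rfl
  trans _ _ _ := Eq.trans
  wf := ⟨fun _ => ⟨_, fun _ hy => absurd hy.1.symm hy.2⟩⟩
  val _ := Set.univ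

theorem isUniformDiscrete_twoPoint : (twoPoint P).IsUniformDiscrete :=
  ⟨fun _ _ => id, fun _ _ _ => Iff.rfl⟩

end PrefModel

namespace DynOp

variable {P : Type}

def identity (P : Type) : DynOp P where
  rel M _ := M.le
  refl M _ := M.refl
  trans M _ := M.trans
  wf M _ := M.wf

def collapseUniformDiscrete (P : Type) : DynOp P where
  rel M _ w w' := M.IsUniformDiscrete ∨ M.le w w'
  refl M _ w := Or.inr (M.refl w)
  trans M _ w₁ w₂ w₃
    | .inl h, _ => .inl h
    | _, .inl h => .inl h
    | .inr h₁, .inr h₂ => .inr (M.trans w₁ w₂ w₃ h₁ h₂)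
  wf M _ := Subrelation.wf
    (fun h => ⟨h.1.resolve_left fun hU => h.2 (.inl hU), fun hle => h.2 (.inr hle)⟩) M.wf

theorem apply_eq_self {s : DynOp P} {M : PrefModel P} {φ : PForm P}
    (h : s.rel M φ = M.le) : s.apply M φ = M := by
  obtain ⟨W, le, refl, trans, wf, val⟩ := M
  simp only [DynOp.apply] at h ⊢
  congr

theorem satDP1_identity : SatDP1 (identity P) :=
  fun _ _ _ _ _ _ => Iff.rfl

theorem collapseUniformDiscrete_apply_of_not_isUniformDiscrete {M : PrefModel P}
    (hM : ¬ M.IsUniformDiscrete) (φ : PForm P) : (collapseUniformDiscrete P).apply M φ = M :=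
  apply_eq_self <| by
    funext w w'
    exact propext (or_iff_right hM)

theorem not_satDP1_collapseUniformDiscrete [Nonempty P] :
    ¬ SatDP1 (collapseUniformDiscrete P) := by
  intro h
  obtain ⟨p⟩ := ‹Nonempty P›
  have htrue_le_false : (PrefModel.twoPoint P).le true false :=
    (h (PrefModel.twoPoint P) (.atom p) true false trivial trivial).mp
      (.inl PrefModel.isUniformDiscrete_twoPoint)
  exact Bool.noConfusion htrue_le_false

theorem dsat_identity_iff_collapseUniformDiscrete {M : PrefModel P} (hM : M.IsUniformDiscrete)
    (φ : PForm P) (ξ : DForm P) (w w' : M.W) :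
    dsat (identity P) ξ M w ↔ dsat (identity P) ξ ((collapseUniformDiscrete P).apply M φ) w' := by
  induction ξ generalizing w w' with
  | atom p => exact hM.2 p w w'
  | neg ξ ih => exact not_congr (ih w w')
  | and ξ₁ ξ₂ ih₁ ih₂ => exact and_congr (ih₁ w w') (ih₂ w w')
  | all ξ ih => exact forall_congr' fun u => ih u u
  | boxLe ξ ih =>
    exact ⟨fun h u _ => (ih w u).mp (h w (M.refl w)), fun h u _ => (ih u u).mpr (h u (.inl hM))⟩
  | boxLt ξ ih =>
    -- both strict orders are empty
    refine ⟨fun _ u hu => absurd (.inl hM) hu.2, fun _ u hu => ?_⟩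
    exact absurd (hM.1 u w hu.1 ▸ M.refl u) hu.2
  | dyn _ ξ ih => exact ih w w'

theorem dsat_collapseUniformDiscrete_iff_identity (ξ : DForm P) (M : PrefModel P) (w : M.W) :
    dsat (collapseUniformDiscrete P) ξ M w ↔ dsat (identity P) ξ M w := by
  induction ξ generalizing M w with
  | atom p => rfl
  | neg ξ ih => exact not_congr (ih M w)
  | and ξ₁ ξ₂ ih₁ ih₂ => exact and_congr (ih₁ M w) (ih₂ M w)
  | all ξ ih => exact forall_congr' fun u => ih M u
  | boxLe ξ ih => exact forall_congr' fun u => imp_congr_right fun _ => ih M u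
  | boxLt ξ ih => exact forall_congr' fun u => imp_congr_right fun _ => ih M u
  | dyn φ ξ ih =>
    by_cases hM : M.IsUniformDiscrete
    · exact (ih ((collapseUniformDiscrete P).apply M φ) w).trans
        (dsat_identity_iff_collapseUniformDiscrete hM φ ξ w w).symm
    · have hdsat := congr_arg_heq (dsat (collapseUniformDiscrete P) ξ)
        (collapseUniformDiscrete_apply_of_not_isUniformDiscrete hM φ)
      exact (congrFun (eq_of_heq hdsat) w).to_iff.trans (ih M w)

end DynOp

theorem dp1_not_characterisable {P : Type} (hP : Nonempty P) :
    ∃ star ast : DynOp P, SatDP1 ast ∧ ¬ SatDP1 star ∧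
      ∀ 𝔐 : Set (PrefModel P), ClosedOver star 𝔐 → ClosedOver ast 𝔐 →
        ∀ ξ : DForm P,
          ((∃ M ∈ 𝔐, ∃ w : M.W, dsat star ξ M w) ↔
            (∃ M ∈ 𝔐, ∃ w : M.W, dsat ast ξ M w)) := by
  refine ⟨DynOp.collapseUniformDiscrete P, DynOp.identity P, DynOp.satDP1_identity,
    DynOp.not_satDP1_collapseUniformDiscrete, fun 𝔐 _ _ ξ => ?_⟩
  simp only [DynOp.dsat_collapseUniformDiscrete_iff_identity]
end
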